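/- (Convergence of censored chains.) Let P : ℕ → ℕ → ℝ≥0∞ be row-stochastic, and let (E_n)_{n≥1} be a sequence of nonempty subsets of ℕ with E_n ⊆ E_{n+1} for all n and ⋃_n E_n = ℕ. Then for all states i, j, the censored transition probabilities converge to the original ones: for any i, j, eventually i, j ∈ E_n, and lim_{n → ∞} P^{E_n} i j = P i j (convergence in ℝ≥0∞). -/

import Mathlib

/-!
`P i j ≤ P^E i j` trivially. Conversely, for a substochastic `P` the mass of paths from `i` that
stay in `Eᶜ` for `n + 1` steps dominates the mass of those that then jump to `j ∈ E` plus the mass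
of those that stay one more step; telescoping bounds the excursion part of `P^E i j` by
`∑_{x ∉ E} P i x`, the probability that the first step leaves `E`. Along `E n ↑ ℕ` this tail of the
summable row `P i ·` tends to `0`.
-/

open scoped ENNReal

/-- The censored (taboo-path) transition probability. -/
noncomputable def censored {α : Type*} (P : α → α → ℝ≥0∞) (E : Set α) (i j : α) : ℝ≥0∞ :=
  P i j + ∑' (n : ℕ), ∑' (w : Fin (n + 1) → ↥Eᶜ),
    P i ↑(w 0) * (∏ k : Fin n, P ↑(w k.castSucc) ↑(w k.succ)) * P ↑(w (Fin.last n)) j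

/-- A countable-state transition function is row-stochastic if each row sums to 1. -/
def RowStoch (P : ℕ → ℕ → ℝ≥0∞) : Prop := ∀ i, ∑' j, P i j = 1

open Filter Topology

theorem Monotone.eventually_mem_of_iUnion_eq_univ {ι α : Type*} [Preorder ι] {E : ι → Set α}
    (hE : Monotone E) (hunion : ⋃ n, E n = Set.univ) (x : α) : ∀ᶠ n in atTop, x ∈ E n := by
  obtain ⟨a, ha⟩ := Set.mem_iUnion.1 (hunion ▸ Set.mem_univ x)
  filter_upwards [eventually_ge_atTop a] with n hn using hE hn ha

namespace ENNReal

variable {α : Type*}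

theorem add_tsum_subtype_le_tsum (f : α → ℝ≥0∞) {S : Set α} {j : α} (hj : j ∉ S) :
    f j + ∑' x : S, f x ≤ ∑' x, f x :=
  calc f j + ∑' x : S, f x ≤ ∑' x : ↥Sᶜ, f x + ∑' x : S, f x :=
        add_le_add_left (ENNReal.le_tsum (f := fun x : ↥Sᶜ => f x) ⟨j, hj⟩) _
    _ = ∑' x, f x := by
        rw [add_comm]; exact ENNReal.summable.tsum_add_tsum_compl ENNReal.summable

theorem tendsto_tsum_compl_of_monotone {ι : Type*} [Preorder ι] {f : α → ℝ≥0∞}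
    (hf : ∑' x, f x ≠ ∞) {E : ι → Set α} (hE : Monotone E) (hunion : ⋃ n, E n = Set.univ) :
    Tendsto (fun n => ∑' x : ↥(E n)ᶜ, f x) atTop (𝓝 0) := by
  refine tendsto_order.2 ⟨fun a ha => absurd ha not_lt_zero, fun ε hε => ?_⟩
  obtain ⟨s, hs⟩ := ((tendsto_order.1 (tendsto_tsum_compl_atTop_zero hf)).2 ε hε).exists
  have hsE : ∀ᶠ n in atTop, ∀ x ∈ s, x ∈ E n :=
    (eventually_all_finset s).2 fun x _ => hE.eventually_mem_of_iUnion_eq_univ hunion x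
  filter_upwards [hsE] with n hn
  exact (tsum_mono_subtype f fun x (hx : x ∉ E n) (hxs : x ∈ s) => hx (hn x hxs)).trans_lt hs

end ENNReal

section TabooPaths

variable {α : Type*} (P : α → α → ℝ≥0∞) (S : Set α)

noncomputable def pathWeight (i : α) {n : ℕ} (w : Fin (n + 1) → S) : ℝ≥0∞ :=
  P i (w 0) * ∏ k : Fin n, P (w k.castSucc) (w k.succ)

noncomputable def stayProb (i : α) (n : ℕ) : ℝ≥0∞ :=
  ∑' w : Fin (n + 1) → S, pathWeight P S i w

noncomputable def exitProb (i j : α) (n : ℕ) : ℝ≥0∞ :=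
  ∑' w : Fin (n + 1) → S, pathWeight P S i w * P (w (Fin.last n)) j

variable {P S}

theorem pathWeight_snoc (i : α) {n : ℕ} (w : Fin (n + 1) → S) (x : S) :
    pathWeight P S i (Fin.snoc w x : Fin (n + 2) → S)
      = pathWeight P S i w * P (w (Fin.last n)) x := by
  have h0 : (Fin.snoc w x : Fin (n + 2) → S) 0 = w 0 := Fin.snoc_castSucc (i := 0) ..
  simp only [pathWeight, h0, Fin.prod_univ_castSucc, Fin.succ_castSucc, Fin.snoc_castSucc,
    Fin.succ_last, Fin.snoc_last, mul_assoc]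

theorem stayProb_succ (i : α) (n : ℕ) :
    stayProb P S i (n + 1)
      = ∑' w : Fin (n + 1) → S, pathWeight P S i w * ∑' x : S, P (w (Fin.last n)) x := by
  rw [stayProb, ← (Fin.snocEquiv fun _ => S).tsum_eq, ENNReal.tsum_prod', ENNReal.tsum_comm]
  simp only [Fin.snocEquiv, Equiv.coe_fn_mk, pathWeight_snoc, ENNReal.tsum_mul_left]

theorem stayProb_zero (i : α) : stayProb P S i 0 = ∑' x : S, P i x := by
  rw [stayProb, ← (Equiv.funUnique (Fin 1) S).symm.tsum_eq]
  simp [pathWeight]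

theorem exitProb_add_stayProb_succ_le (hP : ∀ y, ∑' z, P y z ≤ 1) {j : α} (hj : j ∉ S) (i : α)
    (n : ℕ) : exitProb P S i j n + stayProb P S i (n + 1) ≤ stayProb P S i n := by
  rw [stayProb_succ, exitProb, ← ENNReal.tsum_add, stayProb]
  refine ENNReal.tsum_le_tsum fun w => ?_
  calc pathWeight P S i w * P (w (Fin.last n)) j
        + pathWeight P S i w * ∑' x : S, P (w (Fin.last n)) x
      = pathWeight P S i w * (P (w (Fin.last n)) j + ∑' x : S, P (w (Fin.last n)) x) :=
        (mul_add _ _ _).symm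
    _ ≤ pathWeight P S i w * 1 :=
        mul_le_mul_right ((ENNReal.add_tsum_subtype_le_tsum _ hj).trans (hP _)) _
    _ = pathWeight P S i w := mul_one _

theorem tsum_exitProb_le (hP : ∀ y, ∑' z, P y z ≤ 1) {j : α} (hj : j ∉ S) (i : α) :
    ∑' n, exitProb P S i j n ≤ ∑' x : S, P i x := by
  have telescope : ∀ N, ∑ n ∈ Finset.range N, exitProb P S i j n + stayProb P S i N
      ≤ stayProb P S i 0 := by
    intro N
    induction N with
    | zero => simp
    | succ N ih =>
      calc ∑ n ∈ Finset.range (N + 1), exitProb P S i j n + stayProb P S i (N + 1)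
          = ∑ n ∈ Finset.range N, exitProb P S i j n
              + (exitProb P S i j N + stayProb P S i (N + 1)) := by
            rw [Finset.sum_range_succ, add_assoc]
        _ ≤ ∑ n ∈ Finset.range N, exitProb P S i j n + stayProb P S i N :=
            add_le_add_right (exitProb_add_stayProb_succ_le hP hj i N) _
        _ ≤ stayProb P S i 0 := ih
  rw [← stayProb_zero]
  exact ENNReal.tsum_le_of_sum_range_le fun N => le_self_add.trans (telescope N)

end TabooPaths

theorem censored_eq_add_tsum_exitProb {α : Type*} (P : α → α → ℝ≥0∞) (E : Set α) (i j : α) :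
    censored P E i j = P i j + ∑' n, exitProb P Eᶜ i j n :=
  rfl

theorem censored_le_add_tsum_compl {α : Type*} {P : α → α → ℝ≥0∞} (hP : ∀ y, ∑' z, P y z ≤ 1)
    {E : Set α} {j : α} (hj : j ∈ E) (i : α) :
    censored P E i j ≤ P i j + ∑' x : ↥Eᶜ, P i x := by
  rw [censored_eq_add_tsum_exitProb]
  exact add_le_add_right (tsum_exitProb_le hP (Set.notMem_compl_iff.2 hj) i) _

theorem censored_tendsto_general (P : ℕ → ℕ → ℝ≥0∞) (hP : RowStoch P)
    (E : ℕ → Set ℕ) (hmono : ∀ n, E n ⊆ E (n + 1))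
    (hunion : (⋃ n, E n) = Set.univ) (i j : ℕ) :
    (∀ᶠ n in Filter.atTop, i ∈ E n ∧ j ∈ E n) ∧
      Filter.Tendsto (fun n => censored P (E n) i j) Filter.atTop (nhds (P i j)) := by
  have hE : Monotone E := monotone_nat_of_le_succ hmono
  have hmem : ∀ᶠ n in atTop, i ∈ E n ∧ j ∈ E n :=
    (hE.eventually_mem_of_iUnion_eq_univ hunion i).and
      (hE.eventually_mem_of_iUnion_eq_univ hunion j)
  refine ⟨hmem, ?_⟩
  have htail : Tendsto (fun n => P i j + ∑' x : ↥(E n)ᶜ, P i x) atTop (𝓝 (P i j)) := by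
    have hrow : ∑' x, P i x ≠ ∞ := by simp [hP i]
    simpa using (ENNReal.tendsto_tsum_compl_of_monotone hrow hE hunion).const_add (P i j)
  refine tendsto_of_tendsto_of_tendsto_of_le_of_le' tendsto_const_nhds htail
    (Eventually.of_forall fun n => le_self_add) ?_
  filter_upwards [hmem] with n hn
  exact censored_le_add_tsum_compl (fun y => (hP y).le) hn.2 i

/-- Convergence of censored chains: if the nonempty censoring sets `E n` increase to the
whole state space, then every pair of states is eventually in `E n` and the censored
transition probabilities converge to the original ones. -/
theorem censored_tendsto (P : ℕ → ℕ → ℝ≥0∞) (hP : RowStoch P)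
    (E : ℕ → Set ℕ) (hne : ∀ n, (E n).Nonempty) (hmono : ∀ n, E n ⊆ E (n + 1))
    (hunion : (⋃ n, E n) = Set.univ) (i j : ℕ) :
    (∀ᶠ n in Filter.atTop, i ∈ E n ∧ j ∈ E n) ∧
      Filter.Tendsto (fun n => censored P (E n) i j) Filter.atTop (nhds (P i j)) :=
  censored_tendsto_general P hP E hmono hunion i j
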